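/- arXiv:1004.5292 — 6 statements merged into one kernel-verified Lean document; each statement's English description precedes it below -/
import Mathlib

section
/- Let φ be a set of points in the Euclidean plane and let u, v be distinct points of φ. If {u,v} is an edge of the Relative Neighborhood Graph of φ (i.e., the lune of u and v contains no point of φ), then {u,v} is an edge of the Gabriel graph of φ (i.e., the open disk having the segment uv as a diameter — the open ball centered at the midpoint of u and v with radius dist(u,v)/2 — contains no point of φ). -/
/-- The lune of two points `u v`: the intersection of the open balls of radius
`dist u v` centered at `u` and at `v`. -/
def lune (u v : EuclideanSpace ℝ (Fin 2)) : Set (EuclideanSpace ℝ (Fin 2)) :=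
  Metric.ball u (dist u v) ∩ Metric.ball v (dist u v)

/-- `{u,v}` is an edge of the Relative Neighborhood Graph of the configuration `φ`:
`u, v` are distinct points of `φ` and the lune of `u` and `v` contains no point of `φ`. -/
def IsRNGEdge (φ : Set (EuclideanSpace ℝ (Fin 2))) (u v : EuclideanSpace ℝ (Fin 2)) : Prop :=
  u ∈ φ ∧ v ∈ φ ∧ u ≠ v ∧ ∀ p ∈ φ, p ∉ lune u v

/-- `{u,v}` is an edge of the Gabriel graph of the configuration `φ`:
`u, v` are distinct points of `φ` and the open disk with diameter `uv`
contains no point of `φ`. -/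
def IsGabrielEdge (φ : Set (EuclideanSpace ℝ (Fin 2))) (u v : EuclideanSpace ℝ (Fin 2)) : Prop :=
  u ∈ φ ∧ v ∈ φ ∧ u ≠ v ∧ ∀ p ∈ φ, p ∉ Metric.ball (midpoint ℝ u v) (dist u v / 2)

/-- The Relative Neighborhood Graph is a subgraph of the Gabriel graph. -/
theorem rng_subgraph_gabriel (φ : Set (EuclideanSpace ℝ (Fin 2)))
    (u v : EuclideanSpace ℝ (Fin 2)) (h : IsRNGEdge φ u v) :
    IsGabrielEdge φ u v := by
  obtain ⟨hu, hv, hne, hl⟩ := h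
  refine ⟨hu, hv, hne, fun p hp hball => hl p hp ?_⟩
  rw [Metric.mem_ball] at hball
  have hmu : dist (midpoint ℝ u v) u = dist u v / 2 := by
    rw [dist_comm, dist_left_midpoint]; norm_num; ring
  have hmv : dist (midpoint ℝ u v) v = dist u v / 2 := by
    rw [dist_comm, dist_right_midpoint]; norm_num; ring
  constructor <;> rw [Metric.mem_ball]
  · calc dist p u ≤ dist p (midpoint ℝ u v) + dist (midpoint ℝ u v) u := dist_triangle _ _ _
      _ < dist u v / 2 + dist u v / 2 := by rw [hmu]; linarith
      _ = dist u v := by ring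
  · calc dist p v ≤ dist p (midpoint ℝ u v) + dist (midpoint ℝ u v) v := dist_triangle _ _ _
      _ < dist u v / 2 + dist u v / 2 := by rw [hmv]; linarith
      _ = dist u v := by ring
end

section
/- Let φ be a set of points in the Euclidean plane, let u, v, w be three pairwise distinct points of φ, and suppose that both {u,v} and {u,w} are edges of the Relative Neighborhood Graph of φ. If dist(u,v) ≠ dist(u,w), then dist(v,w) ≥ max(dist(u,v), dist(u,w)). -/
/-- If `{u,v}` and `{u,w}` are RNG edges and `dist u v ≠ dist u w`, then
`dist v w ≥ max (dist u v) (dist u w)`. -/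
theorem rng_neighbors_far_apart (φ : Set (EuclideanSpace ℝ (Fin 2)))
    (u v w : EuclideanSpace ℝ (Fin 2))
    (hvw : v ≠ w) (huv : IsRNGEdge φ u v) (huw : IsRNGEdge φ u w)
    (hdist : dist u v ≠ dist u w) :
    dist v w ≥ max (dist u v) (dist u w) := by
  obtain ⟨hu, hv, huv', hlune1⟩ := huv
  obtain ⟨_, hw, huw', hlune2⟩ := huw
  rcases lt_or_gt_of_ne hdist with h | h
  · -- dist u v < dist u w: v ∉ lune u w forces dist w v ≥ dist u w
    have hvnot := hlune2 v hv
    simp only [lune, Set.mem_inter_iff, Metric.mem_ball, not_and_or, not_lt] at hvnot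
    rcases hvnot with h' | h'
    · rw [dist_comm v u] at h'
      exact absurd h' (not_le.mpr h)
    · rw [max_eq_right h.le]
      exact h'
  · have hwnot := hlune1 w hw
    simp only [lune, Set.mem_inter_iff, Metric.mem_ball, not_and_or, not_lt] at hwnot
    rcases hwnot with h' | h'
    · rw [dist_comm w u] at h'
      exact absurd h' (not_le.mpr h)
    · rw [dist_comm w v] at h'
      rw [max_eq_left h.le]
      exact h'
end

section
/- Let φ be a set of points in the Euclidean plane, let u, v, w be three pairwise distinct points of φ, and suppose that both {u,v} and {u,w} are edges of the Relative Neighborhood Graph of φ and that dist(u,v) ≠ dist(u,w). Then the (undirected) angle ∠(v, u, w) at the vertex u is at least π/3. -/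
lemma rng_aux (u v w : EuclideanSpace ℝ (Fin 2)) (huv : v ≠ u)
    (h : dist u v < dist u w) (hvw : dist u w ≤ dist v w) :
    EuclideanGeometry.angle v u w ≥ Real.pi / 3 := by
  have hduv : 0 < dist u v := dist_pos.mpr (fun e => huv e.symm)
  have hduw : 0 < dist u w := lt_trans hduv h
  have hlaw := EuclideanGeometry.law_cos v u w
  -- dist v w ^ 2 = dist v u ^ 2 + dist w u ^ 2 - 2 * dist v u * dist w u * cos (angle v u w)
  have hcos : Real.cos (EuclideanGeometry.angle v u w) < 1 / 2 := by
    have hsq : dist u w ^ 2 ≤ dist v w ^ 2 :=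
      pow_le_pow_left₀ dist_nonneg hvw 2
    rw [dist_comm v u, dist_comm w u] at hlaw
    have hc : Real.cos (EuclideanGeometry.angle v u w) =
        (dist u v ^ 2 + dist u w ^ 2 - dist v w ^ 2) / (2 * dist u v * dist u w) := by
      field_simp
      nlinarith [hlaw]
    rw [hc]
    rw [div_lt_iff₀ (by positivity)]
    nlinarith
  have hmem : EuclideanGeometry.angle v u w ∈ Set.Icc 0 Real.pi :=
    ⟨EuclideanGeometry.angle_nonneg _ _ _, EuclideanGeometry.angle_le_pi _ _ _⟩
  by_contra hlt
  push_neg at hlt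
  have hpi3 : (Real.pi / 3 : ℝ) ∈ Set.Icc (0:ℝ) Real.pi := by
    constructor <;> nlinarith [Real.pi_pos]
  have := Real.strictAntiOn_cos hmem hpi3 hlt
  rw [Real.cos_pi_div_three] at this
  linarith

/-- If `{u,v}` and `{u,w}` are RNG edges with `dist u v ≠ dist u w`, then the angle
at `u` between `v` and `w` is at least `π/3`. -/
theorem rng_neighbors_angle_ge_pi_div_three (φ : Set (EuclideanSpace ℝ (Fin 2)))
    (u v w : EuclideanSpace ℝ (Fin 2))
    (hvw : v ≠ w) (huv : IsRNGEdge φ u v) (huw : IsRNGEdge φ u w)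
    (hdist : dist u v ≠ dist u w) :
    EuclideanGeometry.angle v u w ≥ Real.pi / 3 := by
  rcases hdist.lt_or_gt with h | h
  · -- v is not in the lune of u, w
    have hv : v ∉ lune u w := huw.2.2.2 v huv.2.1
    have hvball : v ∈ Metric.ball u (dist u w) := by
      simpa [Metric.mem_ball, dist_comm] using h
    have hvw' : dist u w ≤ dist v w := by
      by_contra hc
      exact hv ⟨hvball, by simpa [Metric.mem_ball] using not_le.mp hc⟩
    exact rng_aux u v w (huv.2.2.1 ∘ Eq.symm) h hvw'
  · have hw : w ∉ lune u v := huv.2.2.2 w huw.2.1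
    have hwball : w ∈ Metric.ball u (dist u v) := by
      simpa [Metric.mem_ball, dist_comm] using h
    have hwv' : dist u v ≤ dist w v := by
      by_contra hc
      exact hw ⟨hwball, by simpa [Metric.mem_ball] using not_le.mp hc⟩
    rw [EuclideanGeometry.angle_comm]
    exact rng_aux u w v (huw.2.2.1 ∘ Eq.symm) h hwv'
end

section
/- Let φ be a set of points in the Euclidean plane, let u ∈ φ, and let N = { w ∈ φ : w ≠ u and {u,w} is an edge of the Relative Neighborhood Graph of φ } be the set of RNG-neighbors of u. Assume the distances from u to the points of N are pairwise distinct (for all w, w' ∈ N with w ≠ w', dist(u,w) ≠ dist(u,w')). Then N is finite and has at most 6 elements. -/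
open Real EuclideanGeometry

/-- If `w` lies in the configuration and `{u,w'}` is an RNG edge with
`dist u w < dist u w'` and `w ≠ u`, then the angle at `u` exceeds `π/3`. -/
lemma rng_angle_gt {φ : Set (EuclideanSpace ℝ (Fin 2))} {u w w' : EuclideanSpace ℝ (Fin 2)}
    (hw : w ∈ φ) (hw' : IsRNGEdge φ u w') (hlt : dist u w < dist u w') (hw0 : w ≠ u) :
    π / 3 < InnerProductGeometry.angle (w - u) (w' - u) := by
  have hnl := hw'.2.2.2 w hw
  have ha : (0:ℝ) < dist u w := dist_pos.2 (Ne.symm hw0)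
  have hc : dist u w' ≤ dist w w' := by
    by_contra hcon
    push_neg at hcon
    refine hnl ⟨?_, ?_⟩
    · rwa [Metric.mem_ball, dist_comm]
    · rwa [Metric.mem_ball]
  have hlaw := EuclideanGeometry.law_cos w u w'
  have hangle : ∠ w u w' = InnerProductGeometry.angle (w - u) (w' - u) := by
    rw [EuclideanGeometry.angle, vsub_eq_sub, vsub_eq_sub]
  rw [hangle] at hlaw
  set θ := InnerProductGeometry.angle (w - u) (w' - u) with hθ
  have h0 : 0 ≤ θ := InnerProductGeometry.angle_nonneg _ _
  have hπ : θ ≤ π := InnerProductGeometry.angle_le_pi _ _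
  have hcos : Real.cos θ < 1 / 2 := by
    have h1 : dist w u = dist u w := dist_comm w u
    have h2 : dist w' u = dist u w' := dist_comm w' u
    rw [h1, h2] at hlaw
    nlinarith [hlaw, hc, hlt, ha,
      mul_le_mul hc hc dist_nonneg dist_nonneg,
      mul_pos ha (ha.trans hlt)]
  by_contra hle
  push_neg at hle
  have : Real.cos (π / 3) ≤ Real.cos θ :=
    Real.cos_le_cos_of_nonneg_of_le_pi h0 (by linarith [Real.pi_pos]) hle
  rw [Real.cos_pi_div_three] at this
  linarith

/-- Two angles in `(-π, π]` lying in the same sector (mod 6) are within `π/3`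
of each other as elements of `Real.Angle`. -/
lemma sector_close {θ θ' : ℝ} (h : θ ∈ Set.Ioc (-π) π) (h' : θ' ∈ Set.Ioc (-π) π)
    (hg : ((⌊(θ + π) / (π / 3)⌋ : ℤ) : ZMod 6) = ((⌊(θ' + π) / (π / 3)⌋ : ℤ) : ZMod 6)) :
    |(((θ' : Real.Angle) - (θ : Real.Angle)).toReal)| < π / 3 := by
  have hπ : (0:ℝ) < π := Real.pi_pos
  have h3 : (0:ℝ) < π / 3 := by linarith
  set a := ⌊(θ + π) / (π / 3)⌋ with ha
  set b := ⌊(θ' + π) / (π / 3)⌋ with hb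
  -- basic floor bounds
  have hfl : ∀ ψ : ℝ, (⌊(ψ + π) / (π / 3)⌋ : ℝ) * (π / 3) ≤ ψ + π ∧
      ψ + π < ((⌊(ψ + π) / (π / 3)⌋ : ℝ) + 1) * (π / 3) := by
    intro ψ
    constructor
    · have := Int.floor_le ((ψ + π) / (π / 3))
      rwa [le_div_iff₀ h3] at this
    · have := Int.lt_floor_add_one ((ψ + π) / (π / 3))
      rwa [div_lt_iff₀ h3] at this
  have hrange : ∀ ψ : ℝ, ψ ∈ Set.Ioc (-π) π →
      0 ≤ ⌊(ψ + π) / (π / 3)⌋ ∧ ⌊(ψ + π) / (π / 3)⌋ ≤ 6 := by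
    intro ψ hψ
    obtain ⟨hψ1, hψ2⟩ := hψ
    constructor
    · exact Int.floor_nonneg.2 (div_nonneg (by linarith) (by positivity))
    · have h1 := (hfl ψ).1
      have : ((⌊(ψ + π) / (π / 3)⌋ : ℝ)) ≤ 6 := by nlinarith
      exact_mod_cast this
  have haR := hrange θ h
  have hbR := hrange θ' h'
  have hmod : a % 6 = b % 6 := (ZMod.intCast_eq_intCast_iff' a b 6).1 hg
  have hcases : a = b ∨ (a = 0 ∧ b = 6) ∨ (a = 6 ∧ b = 0) := by omega
  -- key computation: exhibit the representative of the angle difference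
  have key : ∀ r : ℝ, ((θ' - θ : ℝ) : Real.Angle) = (r : Real.Angle) → -π < r → r ≤ π →
      |r| < π / 3 → |(((θ' : Real.Angle) - (θ : Real.Angle)).toReal)| < π / 3 := by
    intro r hr h1 h2 h3'
    have hsub : ((θ' : Real.Angle) - (θ : Real.Angle)) = ((θ' - θ : ℝ) : Real.Angle) := by
      rw [Real.Angle.coe_sub]
    rw [hsub, hr, Real.Angle.toReal_coe_eq_self_iff.2 ⟨h1, h2⟩]
    exact h3'
  rcases hcases with hab | ⟨h0', h6⟩ | ⟨h6, h0'⟩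
  · -- same sector: |θ' - θ| < π/3
    have f1 := hfl θ
    have f2 := hfl θ'
    rw [← ha] at f1
    rw [← hb, ← hab] at f2
    refine key (θ' - θ) rfl ?_ ?_ ?_
    · nlinarith [f1.1, f1.2, f2.1, f2.2, h.1, h.2, h'.1, h'.2]
    · nlinarith [f1.1, f1.2, f2.1, f2.2, h.1, h.2, h'.1, h'.2]
    · rw [abs_lt]
      constructor <;> nlinarith [f1.1, f1.2, f2.1, f2.2]
  · -- a = 0, b = 6 : θ near -π, θ' = π
    have f1 := hfl θ
    rw [← ha, h0'] at f1
    have f2 := hfl θ'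
    rw [← hb, h6] at f2
    have hθ'π : θ' = π := by
      have := f2.1
      push_cast at this
      linarith [h'.2]
    have hθb : θ + π < π / 3 := by
      have := f1.2
      push_cast at this
      linarith
    refine key (θ' - θ - 2 * π) ?_ ?_ ?_ ?_
    · have : ((θ' - θ - 2 * π : ℝ) : Real.Angle) = ((θ' - θ : ℝ) : Real.Angle)
          - ((2 * π : ℝ) : Real.Angle) := by rw [Real.Angle.coe_sub]
      rw [eq_comm, this, Real.Angle.coe_two_pi, sub_zero]
    · nlinarith [h.1, h.2]
    · nlinarith [h.1]
    · rw [abs_lt]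
      constructor <;> nlinarith [h.1, h.2]
  · -- a = 6, b = 0 : θ = π, θ' near -π
    have f1 := hfl θ
    rw [← ha, h6] at f1
    have f2 := hfl θ'
    rw [← hb, h0'] at f2
    have hθπ : θ = π := by
      have := f1.1
      push_cast at this
      linarith [h.2]
    have hθb : θ' + π < π / 3 := by
      have := f2.2
      push_cast at this
      linarith
    refine key (θ' - θ + 2 * π) ?_ ?_ ?_ ?_
    · have : ((θ' - θ + 2 * π : ℝ) : Real.Angle) = ((θ' - θ : ℝ) : Real.Angle)
          + ((2 * π : ℝ) : Real.Angle) := by rw [Real.Angle.coe_add]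
      rw [eq_comm, this, Real.Angle.coe_two_pi, add_zero]
    · nlinarith [h'.1]
    · nlinarith [h'.1, h'.2]
    · rw [abs_lt]
      constructor <;> nlinarith [h'.1, h'.2]

/-- Under a general position assumption (distances from `u` to its RNG-neighbors are
pairwise distinct), the set of RNG-neighbors of `u` is finite with at most 6 elements. -/
theorem rng_degree_le_six (φ : Set (EuclideanSpace ℝ (Fin 2)))
    (u : EuclideanSpace ℝ (Fin 2)) (hu : u ∈ φ)
    (N : Set (EuclideanSpace ℝ (Fin 2)))
    (hN : N = {w ∈ φ | w ≠ u ∧ IsRNGEdge φ u w})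
    (hgen : ∀ w ∈ N, ∀ w' ∈ N, w ≠ w' → dist u w ≠ dist u w') :
    N.Finite ∧ N.ncard ≤ 6 := by
  haveI : Fact (Module.finrank ℝ (EuclideanSpace ℝ (Fin 2)) = 2) :=
    ⟨finrank_euclideanSpace_fin⟩
  set o : Orientation ℝ (EuclideanSpace ℝ (Fin 2)) (Fin 2) :=
    (EuclideanSpace.basisFun (Fin 2) ℝ).toBasis.orientation with ho
  set e : EuclideanSpace ℝ (Fin 2) := EuclideanSpace.single 0 1 with he
  have he0 : e ≠ 0 := by
    intro hcon
    have : ‖e‖ = 1 := by rw [he, EuclideanSpace.norm_single]; norm_num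
    rw [hcon, norm_zero] at this
    norm_num at this
  set f : EuclideanSpace ℝ (Fin 2) → ZMod 6 :=
    fun w => ((⌊((o.oangle e (w - u)).toReal + π) / (π / 3)⌋ : ℤ) : ZMod 6) with hf
  have hinj : Set.InjOn f N := by
    intro w hw w' hw' hfe
    by_contra hne
    -- both are RNG neighbors with distinct distances
    have hwN := hN ▸ hw
    have hw'N := hN ▸ hw'
    obtain ⟨hwφ, hwu, hwE⟩ := hwN
    obtain ⟨hw'φ, hw'u, hw'E⟩ := hw'N
    have hz : w - u ≠ 0 := sub_ne_zero.2 hwu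
    have hz' : w' - u ≠ 0 := sub_ne_zero.2 hw'u
    -- the angle between the two neighbors, seen at u, exceeds π/3
    have hbig : π / 3 < InnerProductGeometry.angle (w - u) (w' - u) := by
      rcases lt_or_gt_of_ne (hgen w hw w' hw' hne) with hlt | hgt
      · exact rng_angle_gt hwφ hw'E hlt hwu
      · rw [InnerProductGeometry.angle_comm]
        exact rng_angle_gt hw'φ hwE hgt hw'u
    -- but the sector argument shows it is less than π/3
    have hsmall : InnerProductGeometry.angle (w - u) (w' - u) < π / 3 := by
      have hmem : (o.oangle e (w - u)).toReal ∈ Set.Ioc (-π) π :=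
        ⟨Real.Angle.neg_pi_lt_toReal _, Real.Angle.toReal_le_pi _⟩
      have hmem' : (o.oangle e (w' - u)).toReal ∈ Set.Ioc (-π) π :=
        ⟨Real.Angle.neg_pi_lt_toReal _, Real.Angle.toReal_le_pi _⟩
      have hsc := sector_close hmem hmem' hfe
      have hrw : (((o.oangle e (w' - u)).toReal : Real.Angle)
          - ((o.oangle e (w - u)).toReal : Real.Angle)) = o.oangle (w - u) (w' - u) := by
        rw [Real.Angle.coe_toReal, Real.Angle.coe_toReal]
        exact o.oangle_sub_left he0 hz hz'
      rw [hrw] at hsc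
      rwa [o.angle_eq_abs_oangle_toReal hz hz']
    linarith
  have hfin : N.Finite := Set.Finite.of_finite_image (Set.toFinite _) hinj
  refine ⟨hfin, ?_⟩
  calc N.ncard = (f '' N).ncard := (Set.ncard_image_of_injOn hinj).symm
    _ ≤ (Set.univ : Set (ZMod 6)).ncard :=
        Set.ncard_le_ncard (Set.subset_univ _) (Set.toFinite _)
    _ = 6 := by simp [Set.ncard_univ]
end

section
/- Let c and v be points of the Euclidean plane with dist(c,v) = r, where r > 0, and let 0 < s ≤ 2r. Then the Lebesgue area of the intersection of the open ball of radius r centered at c with the open ball of radius s centered at v equals −r·s·√(1 − s²/(4r²)) + (2r² − s²)·arcsin(s/(2r)) + π·s²/2. -/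
/-!
After an isometry `c = (0, 0)` and `v = (r, 0)`, and the intersection is the lens
`y² < min (r² - x²) (s² - (x - r)²)`, `r - s < x ≤ r`, of area `∫ 2 √(min …) dx`.
The circles cross at `x₀ = r - s² / (2r)`: left of `x₀` the small disk is the binding constraint,
right of it the big one, so the area is a sum of two circular segments. Rescaled to the unit
circle, both are evaluated with the primitive `u √(1 - u²) + arcsin u` of `2 √(1 - u²)`, and the
double-angle identity `arcsin (1 - 2t²) = π/2 - 2 arcsin t`, `t = s / (2r)`, collects the arcsines.
-/

open Real MeasureTheory Metric Set

noncomputable def circleAreaPrimitive (u : ℝ) : ℝ := u * √(1 - u ^ 2) + arcsin u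

lemma continuous_circleAreaPrimitive : Continuous circleAreaPrimitive := by
  unfold circleAreaPrimitive
  fun_prop

lemma hasDerivAt_circleAreaPrimitive {u : ℝ} (h₁ : -1 < u) (h₂ : u < 1) :
    HasDerivAt circleAreaPrimitive (2 * √(1 - u ^ 2)) u := by
  have hpos : 0 < √(1 - u ^ 2) := sqrt_pos.2 (by nlinarith)
  have hsqrt : HasDerivAt (fun u => √(1 - u ^ 2)) (-(2 * u) / (2 * √(1 - u ^ 2))) u := by
    refine HasDerivAt.sqrt ?_ (by nlinarith)
    simpa using ((hasDerivAt_pow 2 u).const_sub 1)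
  refine (((hasDerivAt_id' u).mul hsqrt).add (hasDerivAt_arcsin h₁.ne' h₂.ne)).congr_deriv ?_
  field_simp
  rw [sq_sqrt (by nlinarith)]
  ring

lemma integral_two_mul_sqrt_one_sub_sq {b c : ℝ} (hb : -1 ≤ b) (hbc : b ≤ c) (hc : c ≤ 1) :
    ∫ u in b..c, 2 * √(1 - u ^ 2) = circleAreaPrimitive c - circleAreaPrimitive b :=
  intervalIntegral.integral_eq_sub_of_hasDerivAt_of_le hbc
    continuous_circleAreaPrimitive.continuousOn
    (fun _ hu => hasDerivAt_circleAreaPrimitive (hb.trans_lt hu.1) (hu.2.trans_le hc))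
    ((by fun_prop : Continuous fun u : ℝ => 2 * √(1 - u ^ 2)).intervalIntegrable _ _)

lemma integral_two_mul_sqrt_sq_sub_sq {a b c : ℝ} (ha : 0 < a) (hb : -a ≤ b) (hbc : b ≤ c)
    (hc : c ≤ a) :
    ∫ x in b..c, 2 * √(a ^ 2 - x ^ 2) =
      a ^ 2 * (circleAreaPrimitive (c / a) - circleAreaPrimitive (b / a)) := by
  have hscale (x : ℝ) : 2 * √(a ^ 2 - x ^ 2) = a * (2 * √(1 - (x / a) ^ 2)) := by
    rw [show a ^ 2 - x ^ 2 = a ^ 2 * (1 - (x / a) ^ 2) by field_simp, sqrt_mul (sq_nonneg a),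
      sqrt_sq ha.le]
    ring
  simp_rw [hscale]
  rw [intervalIntegral.integral_const_mul,
    intervalIntegral.integral_comp_div (fun u => 2 * √(1 - u ^ 2)) ha.ne',
    integral_two_mul_sqrt_one_sub_sq (by rwa [le_div_iff₀ ha, neg_one_mul])
      (div_le_div_of_nonneg_right hbc ha.le) (by rwa [div_le_one ha]), smul_eq_mul]
  ring

lemma circleAreaPrimitive_neg (u : ℝ) : circleAreaPrimitive (-u) = -circleAreaPrimitive u := by
  simp only [circleAreaPrimitive, neg_sq, arcsin_neg]
  ring

lemma circleAreaPrimitive_one : circleAreaPrimitive 1 = π / 2 := by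
  simp [circleAreaPrimitive]

lemma arcsin_one_sub_two_mul_sq {t : ℝ} (h₀ : 0 ≤ t) (h₁ : t ≤ 1) :
    arcsin (1 - 2 * t ^ 2) = π / 2 - 2 * arcsin t := by
  have hcos : cos (2 * arcsin t) = 1 - 2 * t ^ 2 := by
    rw [cos_two_mul, cos_arcsin, sq_sqrt (by nlinarith)]
    ring
  rw [arcsin_eq_pi_div_two_sub_arccos, ← hcos,
    arccos_cos (by linarith [arcsin_nonneg.2 h₀]) (by linarith [arcsin_le_pi_div_two t])]

lemma circleAreaPrimitive_one_sub_two_mul_sq {t : ℝ} (h₀ : 0 ≤ t) (h₁ : t ≤ 1) :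
    circleAreaPrimitive (1 - 2 * t ^ 2) =
      2 * t * (1 - 2 * t ^ 2) * √(1 - t ^ 2) + π / 2 - 2 * arcsin t := by
  have hsqrt : √(1 - (1 - 2 * t ^ 2) ^ 2) = 2 * t * √(1 - t ^ 2) := by
    rw [show 1 - (1 - 2 * t ^ 2) ^ 2 = (2 * t) ^ 2 * (1 - t ^ 2) by ring,
      sqrt_mul (sq_nonneg _), sqrt_sq (by linarith)]
  rw [circleAreaPrimitive, hsqrt, arcsin_one_sub_two_mul_sq h₀ h₁]
  ring

lemma setOf_sq_lt_eq_regionBetween (g : ℝ → ℝ) (I : Set ℝ) :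
    {q : ℝ × ℝ | q.1 ∈ I ∧ q.2 ^ 2 < g q.1} =
      regionBetween (fun x => -√(g x)) (fun x => √(g x)) I := by
  ext ⟨x, y⟩
  simp only [regionBetween, mem_ofPred_eq, mem_Ioo, ← abs_lt, lt_sqrt (abs_nonneg y), sq_abs]

lemma volume_setOf_sq_lt {g : ℝ → ℝ} {a b : ℝ} (hab : a ≤ b)
    (hg : IntervalIntegrable (fun x => √(g x)) volume a b) :
    volume {q : ℝ × ℝ | q.1 ∈ Ioc a b ∧ q.2 ^ 2 < g q.1} =
      ENNReal.ofReal (∫ x in a..b, 2 * √(g x)) := by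
  have hint := (intervalIntegrable_iff_integrableOn_Ioc_of_le hab).1 hg
  rw [setOf_sq_lt_eq_regionBetween, Measure.volume_eq_prod,
    volume_regionBetween_eq_integral (f := fun x => -√(g x)) hint.neg hint measurableSet_Ioc
      (fun x _ => neg_le_self (sqrt_nonneg _)),
    intervalIntegral.integral_of_le hab]
  simp only [Pi.sub_apply, sub_neg_eq_add, ← two_mul]

lemma lens_eq_setOf_sq_lt {r s : ℝ} (hr : 0 ≤ r) (hs : 0 ≤ s) :
    {q : ℝ × ℝ | q.1 ^ 2 + q.2 ^ 2 < r ^ 2 ∧ (q.1 - r) ^ 2 + q.2 ^ 2 < s ^ 2} =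
      {q : ℝ × ℝ | q.1 ∈ Ioc (r - s) r ∧
        q.2 ^ 2 < min (r ^ 2 - q.1 ^ 2) (s ^ 2 - (q.1 - r) ^ 2)} := by
  ext ⟨x, y⟩
  simp only [mem_ofPred_eq, mem_Ioc, lt_min_iff]
  constructor
  · rintro ⟨h₁, h₂⟩
    refine ⟨⟨by nlinarith, by nlinarith⟩, by linarith, by linarith⟩
  · rintro ⟨-, h₁, h₂⟩
    exact ⟨by linarith, by linarith⟩

lemma integral_two_mul_sqrt_lens {r s : ℝ} (hr : 0 < r) (hs : 0 < s) (hs2r : s ≤ 2 * r) :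
    ∫ x in (r - s)..r, 2 * √(min (r ^ 2 - x ^ 2) (s ^ 2 - (x - r) ^ 2)) =
      -(r * s * √(1 - s ^ 2 / (4 * r ^ 2))) + (2 * r ^ 2 - s ^ 2) * arcsin (s / (2 * r)) +
        π * s ^ 2 / 2 := by
  obtain ⟨t, rfl⟩ : ∃ t, s = 2 * r * t := ⟨s / (2 * r), by field_simp⟩
  have ht₀ : 0 < t := by nlinarith
  have ht₁ : t ≤ 1 := by nlinarith
  set x₀ := r * (1 - 2 * t ^ 2) with hx₀
  have hx₀l : r - 2 * r * t ≤ x₀ := by nlinarith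
  have hx₀r : x₀ ≤ r := by nlinarith
  have hleft : ∫ x in (r - 2 * r * t)..x₀,
      2 * √(min (r ^ 2 - x ^ 2) ((2 * r * t) ^ 2 - (x - r) ^ 2)) =
        (2 * r * t) ^ 2 * (circleAreaPrimitive (-t) - circleAreaPrimitive (-1)) := by
    have hmin : EqOn (fun x => 2 * √(min (r ^ 2 - x ^ 2) ((2 * r * t) ^ 2 - (x - r) ^ 2)))
        (fun x => 2 * √((2 * r * t) ^ 2 - (x - r) ^ 2)) (uIcc (r - 2 * r * t) x₀) := by
      intro x hx
      rw [uIcc_of_le hx₀l] at hx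
      dsimp only
      rw [min_eq_right (by nlinarith [mul_nonneg hr.le (sub_nonneg.2 hx.2), hx₀])]
    rw [intervalIntegral.integral_congr hmin,
      intervalIntegral.integral_comp_sub_right (fun u => 2 * √((2 * r * t) ^ 2 - u ^ 2)),
      integral_two_mul_sqrt_sq_sub_sq hs (by linarith) (by linarith) (by nlinarith),
      show (r - 2 * r * t - r) / (2 * r * t) = -1 by field_simp; ring,
      show (x₀ - r) / (2 * r * t) = -t by field_simp; ring]
  have hright : ∫ x in x₀..r,
      2 * √(min (r ^ 2 - x ^ 2) ((2 * r * t) ^ 2 - (x - r) ^ 2)) =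
        r ^ 2 * (circleAreaPrimitive 1 - circleAreaPrimitive (1 - 2 * t ^ 2)) := by
    have hmin : EqOn (fun x => 2 * √(min (r ^ 2 - x ^ 2) ((2 * r * t) ^ 2 - (x - r) ^ 2)))
        (fun x => 2 * √(r ^ 2 - x ^ 2)) (uIcc x₀ r) := by
      intro x hx
      rw [uIcc_of_le hx₀r] at hx
      dsimp only
      rw [min_eq_left (by nlinarith [mul_nonneg hr.le (sub_nonneg.2 hx.1), hx₀])]
    rw [intervalIntegral.integral_congr hmin,
      integral_two_mul_sqrt_sq_sub_sq hr (by nlinarith) hx₀r le_rfl, div_self hr.ne',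
      mul_div_cancel_left₀ _ hr.ne']
  have hcont :
      Continuous fun x => 2 * √(min (r ^ 2 - x ^ 2) ((2 * r * t) ^ 2 - (x - r) ^ 2)) := by
    fun_prop
  rw [← intervalIntegral.integral_add_adjacent_intervals (hcont.intervalIntegrable _ x₀)
    (hcont.intervalIntegrable _ _), hleft, hright, circleAreaPrimitive_neg, circleAreaPrimitive_neg,
    circleAreaPrimitive_one, circleAreaPrimitive_one_sub_two_mul_sq ht₀.le ht₁,
    show (2 * r * t) ^ 2 / (4 * r ^ 2) = t ^ 2 by field_simp; ring,
    show 2 * r * t / (2 * r) = t by field_simp]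
  simp only [circleAreaPrimitive]
  ring

lemma volume_lens {r s : ℝ} (hr : 0 < r) (hs : 0 < s) (hs2r : s ≤ 2 * r) :
    volume {q : ℝ × ℝ | q.1 ^ 2 + q.2 ^ 2 < r ^ 2 ∧ (q.1 - r) ^ 2 + q.2 ^ 2 < s ^ 2} =
      ENNReal.ofReal (-(r * s * √(1 - s ^ 2 / (4 * r ^ 2))) +
        (2 * r ^ 2 - s ^ 2) * arcsin (s / (2 * r)) + π * s ^ 2 / 2) := by
  rw [lens_eq_setOf_sq_lt hr.le hs.le,
    volume_setOf_sq_lt (g := fun x => min (r ^ 2 - x ^ 2) (s ^ 2 - (x - r) ^ 2)) (by linarith)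
      (Continuous.intervalIntegrable (by fun_prop) _ _),
    integral_two_mul_sqrt_lens hr hs hs2r]

section InnerProductSpace

variable {E : Type*} [NormedAddCommGroup E] [InnerProductSpace ℝ E] [FiniteDimensional ℝ E]
  [MeasurableSpace E] [BorelSpace E]

lemma volume_ball_inter_ball_eq_of_dist_eq {c v c' v' : E} (h : dist c v = dist c' v')
    (r s : ℝ) : volume (ball c r ∩ ball v s) = volume (ball c' r ∩ ball v' s) := by
  set T := Submodule.reflection (ℝ ∙ ((v - c) - (v' - c')))ᗮ
  have hT : T (v - c) = v' - c' :=
    Submodule.reflection_sub (by rw [← dist_eq_norm, ← dist_eq_norm, dist_comm, h, dist_comm])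
  let φ : E → E := fun x => c' + T (x - c)
  have hφ : MeasurePreserving φ :=
    (measurePreserving_add_left volume c').comp
      (T.measurePreserving.comp (measurePreserving_sub_right volume c))
  have hφ_iso : Isometry φ := Isometry.of_dist_eq fun x y => by
    simp only [φ, dist_eq_norm, add_sub_add_left_eq_sub, ← map_sub, LinearIsometryEquiv.norm_map,
      sub_sub_sub_cancel_right]
  have hφc : φ c = c' := by simp [φ]
  have hφv : φ v = v' := by simp only [φ, hT, add_sub_cancel]
  have hpre : φ ⁻¹' (ball c' r ∩ ball v' s) = ball c r ∩ ball v s := by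
    rw [preimage_inter, ← hφc, ← hφv, hφ_iso.preimage_ball, hφ_iso.preimage_ball]
  rw [← hpre, hφ.measure_preimage (measurableSet_ball.inter measurableSet_ball).nullMeasurableSet]

end InnerProductSpace

lemma volume_ball_inter_ball_single_eq_volume_lens {r s : ℝ} (hr : 0 ≤ r) (hs : 0 ≤ s) :
    volume (ball (0 : EuclideanSpace ℝ (Fin 2)) r ∩ ball (EuclideanSpace.single 0 r) s) =
      volume {q : ℝ × ℝ | q.1 ^ 2 + q.2 ^ 2 < r ^ 2 ∧ (q.1 - r) ^ 2 + q.2 ^ 2 < s ^ 2} := by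
  have hψ : MeasurePreserving
      (fun q : ℝ × ℝ => WithLp.toLp 2 (MeasurableEquiv.finTwoArrow.symm q)) :=
    (PiLp.volume_preserving_toLp (Fin 2)).comp (volume_preserving_finTwoArrow ℝ).symm
  rw [← hψ.measure_preimage (measurableSet_ball.inter measurableSet_ball).nullMeasurableSet]
  congr 1
  ext q
  simp only [mem_preimage, mem_inter_iff, mem_ball, EuclideanSpace.dist_eq, Fin.sum_univ_two,
    mem_ofPred_eq]
  rw [sqrt_lt (by positivity) hr, sqrt_lt (by positivity) hs]
  simp [Real.dist_eq, sq_abs]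

/-- Area of the intersection of a disk of radius `r` centered at `c` with a disk of
radius `s` centered at a point `v` on the boundary circle of the first disk. -/
theorem area_disk_inter_disk_centered_on_boundary
    (c v : EuclideanSpace ℝ (Fin 2)) (r s : ℝ)
    (hr : 0 < r) (hs : 0 < s) (hs2r : s ≤ 2 * r) (hcv : dist c v = r) :
    volume (ball c r ∩ ball v s) =
      ENNReal.ofReal
        (-(r * s * Real.sqrt (1 - s ^ 2 / (4 * r ^ 2)))
          + (2 * r ^ 2 - s ^ 2) * Real.arcsin (s / (2 * r))
          + Real.pi * s ^ 2 / 2) := by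
  rw [volume_ball_inter_ball_eq_of_dist_eq (c' := 0) (v' := EuclideanSpace.single 0 r)
      (by simp [hcv, abs_of_pos hr]) r s,
    volume_ball_inter_ball_single_eq_volume_lens hr.le hs.le, volume_lens hr hs hs2r]
end

section
/- Fix r > 0 and 0 < α ≤ r. The function f(θ) = α²·θ + (α² − r²)·arcsin( α·sin θ / √(r² + α² − 2αr·cos θ) ) + α·r·sin θ is monotone nondecreasing on the interval [0, arccos(α/(2r))]. -/
open Real

/-!
Away from the degenerate case `|α| = r` the lune area has derivative
`2α²r² sin²θ / (r² + α² − 2αr cos θ)`, whose denominator is `|u − c|² > 0`; hence the area is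
monotone on all of `ℝ`, not only on `[0, arccos (α / (2r))]`. If `α² = r²` the arcsin term
drops out and the derivative is `α² + αr cos θ ≥ 0`.
-/

/-- The paper's `|L(α, r, θ)|`. -/
noncomputable def luneArea (r α θ : ℝ) : ℝ :=
  α ^ 2 * θ
    + (α ^ 2 - r ^ 2) * arcsin (α * sin θ / √(r ^ 2 + α ^ 2 - 2 * α * r * cos θ))
    + α * r * sin θ

section

variable {r α : ℝ}

lemma mul_cos_lt_of_abs_lt (h : |α| < r) (θ : ℝ) : α * cos θ < r :=
  calc α * cos θ ≤ |α * cos θ| := le_abs_self _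
    _ = |α| * |cos θ| := abs_mul _ _
    _ ≤ |α| := mul_le_of_le_one_right (abs_nonneg α) (abs_cos_le_one θ)
    _ < r := h

/-- Law of cosines: `|u − c|²` for `u = (α cos θ, α sin θ)` and `c = (r, 0)`. -/
lemma lune_denom_eq (r α θ : ℝ) :
    r ^ 2 + α ^ 2 - 2 * α * r * cos θ = (r - α * cos θ) ^ 2 + (α * sin θ) ^ 2 := by
  linear_combination -α ^ 2 * sin_sq_add_cos_sq θ

lemma lune_denom_pos (h : |α| < r) (θ : ℝ) : 0 < r ^ 2 + α ^ 2 - 2 * α * r * cos θ := by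
  rw [lune_denom_eq]
  have := sub_pos.2 (mul_cos_lt_of_abs_lt h θ)
  positivity

lemma hasDerivAt_lune_sin_div (h : |α| < r) (θ : ℝ) :
    HasDerivAt (fun θ => α * sin θ / √(r ^ 2 + α ^ 2 - 2 * α * r * cos θ))
      (α * (r * cos θ - α) * (r - α * cos θ) /
        ((r ^ 2 + α ^ 2 - 2 * α * r * cos θ) * √(r ^ 2 + α ^ 2 - 2 * α * r * cos θ))) θ := by
  have hDpos := lune_denom_pos h θ
  have hsqrt := (sqrt_pos.2 hDpos).ne'
  have hDder : HasDerivAt (fun θ => r ^ 2 + α ^ 2 - 2 * α * r * cos θ) (2 * α * r * sin θ) θ := by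
    simpa using ((hasDerivAt_cos θ).const_mul (2 * α * r)).const_sub (r ^ 2 + α ^ 2)
  refine (((hasDerivAt_sin θ).const_mul α).div (hDder.sqrt hDpos.ne') hsqrt).congr_deriv ?_
  have hsq := sq_sqrt hDpos.le
  have hD0 := hDpos.ne'
  generalize √(r ^ 2 + α ^ 2 - 2 * α * r * cos θ) = S at hsqrt hsq ⊢
  rw [hsq]
  field_simp
  rw [hsq]
  congr 1
  linear_combination -α ^ 2 * r * sin_sq_add_cos_sq θ

lemma sqrt_one_sub_sq_lune_sin_div (h : |α| < r) (θ : ℝ) :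
    √(1 - (α * sin θ / √(r ^ 2 + α ^ 2 - 2 * α * r * cos θ)) ^ 2)
      = (r - α * cos θ) / √(r ^ 2 + α ^ 2 - 2 * α * r * cos θ) := by
  have hDpos := lune_denom_pos h θ
  have hrc := sub_pos.2 (mul_cos_lt_of_abs_lt h θ)
  rw [← sqrt_sq (by positivity : 0 ≤ (r - α * cos θ) / √(r ^ 2 + α ^ 2 - 2 * α * r * cos θ))]
  congr 1
  rw [div_pow, div_pow, sq_sqrt hDpos.le, one_sub_div hDpos.ne', lune_denom_eq]
  ring

lemma hasDerivAt_lune_arcsin (h : |α| < r) (θ : ℝ) :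
    HasDerivAt (fun θ => arcsin (α * sin θ / √(r ^ 2 + α ^ 2 - 2 * α * r * cos θ)))
      (α * (r * cos θ - α) / (r ^ 2 + α ^ 2 - 2 * α * r * cos θ)) θ := by
  have hDpos := lune_denom_pos h θ
  have hrc := sub_pos.2 (mul_cos_lt_of_abs_lt h θ)
  have hsqrt := (sqrt_pos.2 hDpos).ne'
  have hlt : 0 < 1 - (α * sin θ / √(r ^ 2 + α ^ 2 - 2 * α * r * cos θ)) ^ 2 := by
    rw [← sqrt_pos, sqrt_one_sub_sq_lune_sin_div h]
    positivity
  have hne_neg : α * sin θ / √(r ^ 2 + α ^ 2 - 2 * α * r * cos θ) ≠ -1 := by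
    intro heq; rw [heq] at hlt; norm_num at hlt
  have hne_one : α * sin θ / √(r ^ 2 + α ^ 2 - 2 * α * r * cos θ) ≠ 1 := by
    intro heq; rw [heq] at hlt; norm_num at hlt
  refine ((hasDerivAt_arcsin hne_neg hne_one).comp θ
    (hasDerivAt_lune_sin_div h θ)).congr_deriv ?_
  rw [sqrt_one_sub_sq_lune_sin_div h]
  generalize r ^ 2 + α ^ 2 - 2 * α * r * cos θ = D at hDpos hsqrt ⊢
  field_simp

lemma hasDerivAt_luneArea (h : |α| < r) (θ : ℝ) :
    HasDerivAt (luneArea r α)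
      (2 * α ^ 2 * r ^ 2 * sin θ ^ 2 / (r ^ 2 + α ^ 2 - 2 * α * r * cos θ)) θ := by
  have hD0 := (lune_denom_pos h θ).ne'
  refine ((((hasDerivAt_id θ).const_mul (α ^ 2)).add
    ((hasDerivAt_lune_arcsin h θ).const_mul (α ^ 2 - r ^ 2))).add
    ((hasDerivAt_sin θ).const_mul (α * r))).congr_deriv ?_
  generalize hD : r ^ 2 + α ^ 2 - 2 * α * r * cos θ = D at hD0 ⊢
  field_simp
  linear_combination -(α ^ 2 + α * r * cos θ) * hD - 2 * α ^ 2 * r ^ 2 * sin_sq_add_cos_sq θ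

lemma monotone_luneArea_of_abs_lt (h : |α| < r) : Monotone (luneArea r α) :=
  monotone_of_hasDerivAt_nonneg (hasDerivAt_luneArea h) fun θ =>
    div_nonneg (by positivity) (lune_denom_pos h θ).le

lemma monotone_luneArea_of_sq_eq (h : α ^ 2 = r ^ 2) : Monotone (luneArea r α) := by
  have hf : luneArea r α = fun θ => α ^ 2 * θ + α * r * sin θ := by
    ext θ
    simp [luneArea, h]
  rw [hf]
  refine monotone_of_hasDerivAt_nonneg (fun θ => ((hasDerivAt_id θ).const_mul (α ^ 2)).add
    ((hasDerivAt_sin θ).const_mul (α * r))) fun θ => ?_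
  show 0 ≤ α ^ 2 * 1 + α * r * cos θ
  nlinarith [mul_nonneg (sq_nonneg (α + r)) (by linarith [neg_one_le_cos θ] : 0 ≤ 1 + cos θ),
    mul_nonneg (sq_nonneg (α - r)) (by linarith [cos_le_one θ] : 0 ≤ 1 - cos θ)]

theorem monotone_luneArea (h : |α| ≤ r) : Monotone (luneArea r α) := by
  rcases h.lt_or_eq with hlt | heq
  · exact monotone_luneArea_of_abs_lt hlt
  · exact monotone_luneArea_of_sq_eq (by rw [← sq_abs, heq])

end

theorem lune_area_monotoneOn_general (r α : ℝ) (hα : 0 < α) (hαr : α ≤ r) :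
    MonotoneOn
      (fun θ : ℝ =>
        α ^ 2 * θ
          + (α ^ 2 - r ^ 2) *
              Real.arcsin (α * Real.sin θ /
                Real.sqrt (r ^ 2 + α ^ 2 - 2 * α * r * Real.cos θ))
          + α * r * Real.sin θ)
      (Set.Icc 0 (Real.arccos (α / (2 * r)))) :=
  (monotone_luneArea (by rwa [abs_of_pos hα])).monotoneOn _

/-- The lune-area function `f(θ) = α²θ + (α² − r²)·arcsin(α sin θ / √(r² + α² − 2αr cos θ))
+ αr sin θ` is monotone nondecreasing on `[0, arccos(α/(2r))]`. -/
theorem lune_area_monotoneOn (r α : ℝ) (hr : 0 < r) (hα : 0 < α) (hαr : α ≤ r) :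
    MonotoneOn
      (fun θ : ℝ =>
        α ^ 2 * θ
          + (α ^ 2 - r ^ 2) *
              Real.arcsin (α * Real.sin θ /
                Real.sqrt (r ^ 2 + α ^ 2 - 2 * α * r * Real.cos θ))
          + α * r * Real.sin θ)
      (Set.Icc 0 (Real.arccos (α / (2 * r)))) :=
  lune_area_monotoneOn_general r α hα hαr
end
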